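/- arXiv:cs/0202021 — 14 statements merged into one kernel-verified Lean document; each statement's English description precedes it below -/
import Mathlib

section
/- Let ⊦ be a cumulative consequence relation. If α ⊦ β, then the plausible consequences of α and of α ∧ β coincide: for every formula γ, α ⊦ γ if and only if α ∧ β ⊦ γ. -/
namespace KLM

/-- Classical propositional formulas over a set `V` of propositional variables. -/
inductive Form (V : Type) : Type
  | var : V → Form V
  | fls : Form V
  | neg : Form V → Form V
  | conj : Form V → Form V → Form V
  | disj : Form V → Form V → Form V
  | impl : Form V → Form V → Form V
  | biim : Form V → Form V → Form V

/-- A world is a truth assignment to the propositional variables. -/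
abbrev World (V : Type) := V → Prop

/-- Satisfaction of a formula by a world (usual classical semantics). -/
def Sat {V : Type} (u : World V) : Form V → Prop
  | Form.var p => u p
  | Form.fls => False
  | Form.neg a => ¬ Sat u a
  | Form.conj a b => Sat u a ∧ Sat u b
  | Form.disj a b => Sat u a ∨ Sat u b
  | Form.impl a b => Sat u a → Sat u b
  | Form.biim a b => Sat u a ↔ Sat u b

variable {V : Type}

/-- `⊨ α` : every world of the universe `U` satisfies `α`. -/
def Valid (U : Set (World V)) (a : Form V) : Prop := ∀ u ∈ U, Sat u a

/-- Reflexivity: α ⊦ α. -/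
def Reflexivity (C : Form V → Form V → Prop) : Prop := ∀ a, C a a

/-- Left Logical Equivalence. -/
def LLE (U : Set (World V)) (C : Form V → Form V → Prop) : Prop :=
  ∀ a b c, Valid U (Form.biim a b) → C a c → C b c

/-- Right Weakening. -/
def RW (U : Set (World V)) (C : Form V → Form V → Prop) : Prop :=
  ∀ a b c, Valid U (Form.impl a b) → C c a → C c b

/-- Cut. -/
def CutRule (C : Form V → Form V → Prop) : Prop :=
  ∀ a b c, C (Form.conj a b) c → C a b → C a c

/-- Cautious Monotonicity. -/
def CautMono (C : Form V → Form V → Prop) : Prop :=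
  ∀ a b c, C a b → C a c → C (Form.conj a b) c

/-- A consequence relation is cumulative iff it satisfies Reflexivity, LLE, RW,
Cut and Cautious Monotonicity. -/
def Cumulative (U : Set (World V)) (C : Form V → Form V → Prop) : Prop :=
  Reflexivity C ∧ LLE U C ∧ RW U C ∧ CutRule C ∧ CautMono C

/-- And rule. -/
def AndRule (C : Form V → Form V → Prop) : Prop :=
  ∀ a b c, C a b → C a c → C a (Form.conj b c)

/-- Or rule. -/
def OrRule (C : Form V → Form V → Prop) : Prop :=
  ∀ a b c, C a c → C b c → C (Form.disj a b) c

/-- A consequence relation is preferential iff it is cumulative and satisfies Or. -/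
def Preferential (U : Set (World V)) (C : Form V → Form V → Prop) : Prop :=
  Cumulative U C ∧ OrRule C

/-- Monotonicity. -/
def Monot (U : Set (World V)) (C : Form V → Form V → Prop) : Prop :=
  ∀ a b c, Valid U (Form.impl a b) → C b c → C a c

/-- EHD : easy half of the deduction theorem. -/
def EHD (C : Form V → Form V → Prop) : Prop :=
  ∀ a b c, C a (Form.impl b c) → C (Form.conj a b) c

/-- Transitivity. -/
def TransRule (C : Form V → Form V → Prop) : Prop :=
  ∀ a b c, C a b → C b c → C a c

/-- Contraposition. -/
def Contraposition (C : Form V → Form V → Prop) : Prop :=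
  ∀ a b, C a b → C (Form.neg b) (Form.neg a)

/-- The rule S: from α ∧ β ⊦ γ infer α ⊦ β → γ. -/
def SRule (C : Form V → Form V → Prop) : Prop :=
  ∀ a b c, C (Form.conj a b) c → C a (Form.impl b c)

/-- MPC : modus ponens in the consequent. -/
def MPC (C : Form V → Form V → Prop) : Prop :=
  ∀ a b c, C a (Form.impl b c) → C a b → C a c

/-- Equivalence rule. -/
def EquivRule (C : Form V → Form V → Prop) : Prop :=
  ∀ a b c, C a b → C b a → C a c → C b c

/-- Loop rule. -/
def LoopRule (C : Form V → Form V → Prop) : Prop :=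
  ∀ k : ℕ, 1 ≤ k → ∀ al : ℕ → Form V,
    (∀ i < k, C (al i) (al (i + 1))) → C (al k) (al 0) → C (al 0) (al k)

/-- A world `m ∈ U` is normal for `α` iff it satisfies every plausible consequence of `α`. -/
def NormalFor (U : Set (World V)) (C : Form V → Form V → Prop)
    (a : Form V) (m : World V) : Prop :=
  m ∈ U ∧ ∀ b, C a b → Sat m b

/-- Compactness assumption on the universe `U`: a set of formulas all of whose finite
subsets are satisfiable (in `U`) is satisfiable (in `U`). -/
def Compactness (U : Set (World V)) : Prop :=
  ∀ G : Set (Form V),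
    (∀ F : Finset (Form V), ↑F ⊆ G → ∃ u ∈ U, ∀ a ∈ F, Sat u a) →
    ∃ u ∈ U, ∀ a ∈ G, Sat u a

/-- `t` is minimal in `A` (w.r.t. `prec`) iff `t ∈ A` and no element of `A` is below `t`. -/
def MinimalIn {S : Type} (prec : S → S → Prop) (A : Set S) (t : S) : Prop :=
  t ∈ A ∧ ∀ s ∈ A, ¬ prec s t

/-- `A` is smooth iff every element of `A` is minimal in `A` or has a minimal
element of `A` below it. -/
def Smooth {S : Type} (prec : S → S → Prop) (A : Set S) : Prop :=
  ∀ t ∈ A, MinimalIn prec A t ∨ ∃ s, prec s t ∧ MinimalIn prec A s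

/-- A cumulative model: states labeled by nonempty sets of worlds of `U`, with a
binary preference relation satisfying the smoothness condition. -/
structure CumulModel (V : Type) (U : Set (World V)) where
  S : Type
  l : S → Set (World V)
  l_sub : ∀ s, l s ⊆ U
  l_ne : ∀ s, (l s).Nonempty
  prec : S → S → Prop
  smooth : ∀ a : Form V, Smooth prec {s : S | ∀ u ∈ l s, Sat u a}

/-- A state satisfies `α` iff every world in its label does. -/
def CumulModel.StateSat {V : Type} {U : Set (World V)} (W : CumulModel V U)
    (s : W.S) (a : Form V) : Prop :=
  ∀ u ∈ W.l s, Sat u a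

/-- The consequence relation defined by a cumulative model: `α ⊦_W β` iff every state
minimal in `α̂` satisfies `β`. -/
def CumulModel.Cons {V : Type} {U : Set (World V)} (W : CumulModel V U)
    (a b : Form V) : Prop :=
  ∀ s : W.S, MinimalIn W.prec {t : W.S | W.StateSat t a} s → W.StateSat s b

/-- A preferential model: states labeled by single worlds of `U`, with a strict
partial order satisfying the smoothness condition. -/
structure PrefModel (V : Type) (U : Set (World V)) where
  S : Type
  l : S → World V
  l_mem : ∀ s, l s ∈ U
  prec : S → S → Prop
  irrefl : ∀ s, ¬ prec s s
  trans : ∀ s t r, prec s t → prec t r → prec s r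
  smooth : ∀ a : Form V, Smooth prec {s : S | Sat (l s) a}

/-- The consequence relation defined by a preferential model. -/
def PrefModel.Cons {V : Type} {U : Set (World V)} (W : PrefModel V U)
    (a b : Form V) : Prop :=
  ∀ s : W.S, MinimalIn W.prec {t : W.S | Sat (W.l t) a} s → Sat (W.l s) b

/-- for a cumulative consequence relation, if α ⊦ β then the plausible
consequences of α and of α ∧ β coincide. -/
theorem stmt0 {V : Type} (U : Set (World V)) (C : Form V → Form V → Prop)
    (hC : Cumulative U C) (a b : Form V) (hab : C a b) :
    ∀ c : Form V, C a c ↔ C (Form.conj a b) c := by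
  obtain ⟨_, _, _, hcut, hcm⟩ := hC
  intro c
  exact ⟨fun h => hcm a b c hab h, fun h => hcut a b c h hab⟩

end KLM
end

section
/- Every cumulative consequence relation ⊦ satisfies the following derived rules: Equivalence (if α ⊦ β, β ⊦ α and α ⊦ γ, then β ⊦ γ); And (if α ⊦ β and α ⊦ γ, then α ⊦ β ∧ γ); MPC (if α ⊦ β → γ and α ⊦ β, then α ⊦ γ); and the rule: if α ∨ β ⊦ α and α ⊦ γ, then α ∨ β ⊦ γ. -/
namespace KLM

variable {V : Type}

/-- every cumulative consequence relation satisfies Equivalence, And,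
MPC, and the rule: if α ∨ β ⊦ α and α ⊦ γ then α ∨ β ⊦ γ. -/
theorem stmt1 {V : Type} (U : Set (World V)) (C : Form V → Form V → Prop)
    (hC : Cumulative U C) :
    EquivRule C ∧ AndRule C ∧ MPC C ∧
      (∀ a b c, C (Form.disj a b) a → C a c → C (Form.disj a b) c) := by
  obtain ⟨hrefl, hlle, hrw, hcut, hcm⟩ := hC
  have hAnd : AndRule C := by
    intro a b c hab hac
    have h1 : C (Form.conj a b) c := hcm a b c hab hac
    have h2 : C (Form.conj (Form.conj a b) c) (Form.conj b c) := by
      apply hrw _ _ _ _ (hrefl (Form.conj (Form.conj a b) c))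
      intro u _; simp [Sat]; tauto
    exact hcut a b _ (hcut (Form.conj a b) c _ h2 h1) hab
  refine ⟨?_, hAnd, ?_, ?_⟩
  · intro a b c hab hba hac
    have h1 : C (Form.conj a b) c := hcm a b c hab hac
    have h2 : C (Form.conj b a) c := by
      apply hlle (Form.conj a b) _ _ _ h1
      intro u _; simp [Sat]; tauto
    exact hcut b a c h2 hba
  · intro a b c h1 h2
    have h3 : C a (Form.conj b (Form.impl b c)) := hAnd a b (Form.impl b c) h2 h1
    apply hrw (Form.conj b (Form.impl b c)) c a _ h3
    intro u _; simp [Sat]; tauto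
  · intro a b c h1 h2
    have h3 : C (Form.conj (Form.disj a b) a) c := by
      apply hlle a _ _ _ h2
      intro u _; simp [Sat]; tauto
    exact hcut _ _ _ h3 h1

end KLM
end

section
/- Let ⊦ be a cumulative consequence relation. Then the following three conditions are equivalent: (i) ⊦ satisfies Monotonicity (if ⊨ α → β and β ⊦ γ then α ⊦ γ); (ii) ⊦ satisfies EHD (if α ⊦ β → γ then α ∧ β ⊦ γ); (iii) ⊦ satisfies Transitivity (if α ⊦ β and β ⊦ γ then α ⊦ γ). -/
namespace KLM

variable {V : Type}

/-- for a cumulative consequence relation, Monotonicity, EHD and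
Transitivity are equivalent. -/
theorem stmt2 {V : Type} (U : Set (World V)) (C : Form V → Form V → Prop)
    (hC : Cumulative U C) :
    (Monot U C ↔ EHD C) ∧ (EHD C ↔ TransRule C) := by
  obtain ⟨hrefl, hlle, hrw, hcut, hcm⟩ := hC
  -- Mono → EHD
  have m2e : Monot U C → EHD C := by
    intro hm a b c hab
    set x := Form.conj a b with hx
    have hx1 : C x (Form.impl b c) := by
      refine hm x a _ (fun u _ => ?_) hab
      exact fun h => h.1
    have hx2 : C x b := by
      refine hrw x b x (fun u _ => ?_) (hrefl x)
      exact fun h => h.2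
    set y := Form.conj x (Form.impl b c) with hy
    have hy1 : C y b := hcm x (Form.impl b c) b hx1 hx2
    have hy2 : C (Form.conj y b) c := by
      refine hrw (Form.conj y b) c (Form.conj y b) (fun u _ => ?_) (hrefl _)
      exact fun h => h.1.2 h.2
    have hy3 : C y c := hcut y b c hy2 hy1
    exact hcut x (Form.impl b c) c hy3 hx1
  -- EHD → Trans
  have e2t : EHD C → TransRule C := by
    intro he a b c hab hbc
    have h1 : C b (Form.impl a c) := by
      refine hrw c (Form.impl a c) b (fun u _ => ?_) hbc
      exact fun h _ => h
    have h2 : C (Form.conj b a) c := he b a c h1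
    have h3 : C (Form.conj a b) c := by
      refine hlle (Form.conj b a) (Form.conj a b) c (fun u _ => ?_) h2
      exact ⟨fun h => ⟨h.2, h.1⟩, fun h => ⟨h.2, h.1⟩⟩
    exact hcut a b c h3 hab
  -- Trans → Mono
  have t2m : TransRule C → Monot U C := by
    intro ht a b c hv hbc
    have hab : C a b := hrw a b a hv (hrefl a)
    exact ht a b c hab hbc
  exact ⟨⟨m2e, fun he => t2m (e2t he)⟩, ⟨e2t, fun ht => m2e (t2m ht)⟩⟩

end KLM
end

section
/- Let ⊦ be a consequence relation satisfying Left Logical Equivalence and Right Weakening. If ⊦ satisfies Contraposition (if α ⊦ β then ¬β ⊦ ¬α), then ⊦ satisfies Monotonicity (if ⊨ α → β and β ⊦ γ then α ⊦ γ). -/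
namespace KLM

variable {V : Type}

/-- in the presence of LLE and RW, Contraposition implies Monotonicity. -/
theorem stmt3 {V : Type} (U : Set (World V)) (C : Form V → Form V → Prop)
    (hLLE : LLE U C) (hRW : RW U C) (hContra : Contraposition C) :
    Monot U C := by
  intro a b c hval hbc
  have h1 : C (Form.neg c) (Form.neg b) := hContra _ _ hbc
  have h2 : C (Form.neg c) (Form.neg a) := by
    apply hRW (Form.neg b) (Form.neg a) _ _ h1
    intro u hu
    have := hval u hu
    simp only [Sat] at *
    tauto
  have h3 : C (Form.neg (Form.neg a)) (Form.neg (Form.neg c)) := hContra _ _ h2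
  have h4 : C a (Form.neg (Form.neg c)) := by
    apply hLLE (Form.neg (Form.neg a)) a _ _ h3
    intro u hu
    simp only [Sat]
    tauto
  apply hRW _ _ _ _ h4
  intro u hu
  simp only [Sat]
  tauto

end KLM
end

section
/- (Soundness for cumulative models) For every cumulative model W, the consequence relation ⊦_W defined by W is a cumulative consequence relation, i.e. it satisfies Reflexivity, Left Logical Equivalence, Right Weakening, Cut and Cautious Monotonicity. -/
namespace KLM

variable {V : Type}

/-- Soundness for cumulative models: the consequence relation defined
by any cumulative model is cumulative. -/
theorem stmt4 {V : Type} {U : Set (World V)} (W : CumulModel V U) :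
    Cumulative U W.Cons := by
  have hsat_conj : ∀ (s : W.S) (a b : Form V),
      W.StateSat s (Form.conj a b) ↔ (W.StateSat s a ∧ W.StateSat s b) := by
    intro s a b
    constructor
    · intro h; exact ⟨fun u hu => (h u hu).1, fun u hu => (h u hu).2⟩
    · intro h u hu; exact ⟨h.1 u hu, h.2 u hu⟩
  refine ⟨?_, ?_, ?_, ?_, ?_⟩
  · -- Reflexivity
    intro a s hs
    exact hs.1
  · -- LLE
    intro a b c hval hC s hs
    have hab : ∀ t : W.S, W.StateSat t a ↔ W.StateSat t b := by
      intro t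
      constructor
      · intro h u hu; exact (hval u (W.l_sub t hu)).mp (h u hu)
      · intro h u hu; exact (hval u (W.l_sub t hu)).mpr (h u hu)
    apply hC
    refine ⟨(hab s).mpr hs.1, fun t ht => hs.2 t ((hab t).mp ht)⟩
  · -- RW
    intro a b c hval hC s hs
    intro u hu
    exact hval u (W.l_sub s hu) (hC s hs u hu)
  · -- Cut
    intro a b c hab ha s hs
    have hsb : W.StateSat s b := ha s hs
    have hsconj : W.StateSat s (Form.conj a b) := (hsat_conj s a b).mpr ⟨hs.1, hsb⟩
    apply hab
    refine ⟨hsconj, fun t ht => hs.2 t ((hsat_conj t a b).mp ht).1⟩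
  · -- Cautious Monotonicity
    intro a b c hb hc s hs
    have hsa : W.StateSat s a := ((hsat_conj s a b).mp hs.1).1
    rcases W.smooth a s hsa with hmin | ⟨t, hts, htmin⟩
    · exact hc s hmin
    · exfalso
      have htb : W.StateSat t b := hb t htmin
      exact hs.2 t ((hsat_conj t a b).mpr ⟨htmin.1, htb⟩) hts

end KLM
end

section
/- Assume the compactness assumption on U. Let ⊦ be a consequence relation satisfying Reflexivity, Right Weakening, and And (if α ⊦ β and α ⊦ γ then α ⊦ β ∧ γ). Then for all formulas α, β: every world normal for α satisfies β if and only if α ⊦ β. -/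
namespace KLM

variable {V : Type}

/-- Conjunction of a list of formulas. -/
def conjList {V : Type} : List (Form V) → Form V
  | [] => Form.neg Form.fls
  | x :: xs => Form.conj x (conjList xs)

lemma sat_conjList {V : Type} (u : World V) (l : List (Form V)) :
    Sat u (conjList l) ↔ ∀ a ∈ l, Sat u a := by
  induction l with
  | nil => simp [conjList, Sat]
  | cons x xs ih => simp [conjList, Sat, ih]

lemma C_conjList {V : Type} {U : Set (World V)} {C : Form V → Form V → Prop}
    (hRefl : Reflexivity C) (hRW : RW U C) (hAnd : AndRule C)
    (a : Form V) (l : List (Form V)) (h : ∀ x ∈ l, C a x) :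
    C a (conjList l) := by
  induction l with
  | nil =>
      exact hRW a (conjList []) a (fun u _ _ => by simp [conjList, Sat]) (hRefl a)
  | cons x xs ih =>
      exact hAnd a x (conjList xs) (h x (by simp))
        (ih (fun y hy => h y (by simp [hy])))

/-- under compactness, if ⊦ satisfies Reflexivity, RW and And, then
every world normal for α satisfies β iff α ⊦ β. -/
theorem stmt5 {V : Type} (U : Set (World V)) (C : Form V → Form V → Prop)
    (hcomp : Compactness U) (hRefl : Reflexivity C) (hRW : RW U C) (hAnd : AndRule C) :
    ∀ a b : Form V, (∀ m : World V, NormalFor U C a m → Sat m b) ↔ C a b := by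
  classical
  intro a b
  constructor
  · intro hall
    by_contra hC
    have key : ∃ u ∈ U, ∀ g ∈ ({Form.neg b} ∪ {g | C a g} : Set (Form V)), Sat u g := by
      apply hcomp
      intro F hF
      set L : List (Form V) := F.toList.filter (fun g => decide (C a g)) with hL
      have hLC : ∀ x ∈ L, C a x := by
        intro x hx
        have := List.of_mem_filter hx
        simpa using this
      have hCδ : C a (conjList L) := C_conjList hRefl hRW hAnd a L hLC
      have hsat : ∃ u ∈ U, Sat u (Form.neg b) ∧ Sat u (conjList L) := by
        by_contra hno
        push_neg at hno
        have hval : Valid U (Form.impl (conjList L) b) := by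
          intro u hu
          intro hδ
          by_contra hb
          exact (hno u hu (by exact hb)) hδ
        exact hC (hRW (conjList L) b a hval hCδ)
      obtain ⟨u, hu, hnb, hδ⟩ := hsat
      refine ⟨u, hu, ?_⟩
      intro g hgF
      rcases hF hgF with hg | hg
      · subst hg; exact hnb
      · have : g ∈ L := by
          apply List.mem_filter.2
          exact ⟨by simpa using (Finset.mem_toList).2 hgF, by simpa using hg⟩
        exact (sat_conjList u L).1 hδ g this
    obtain ⟨m, hm, hmall⟩ := key
    have hnorm : NormalFor U C a m := ⟨hm, fun g hg => hmall g (Or.inr hg)⟩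
    exact (hmall (Form.neg b) (Or.inl rfl)) (hall m hnorm)
  · intro hC m hm
    exact hm.2 b hC

end KLM
end

section
/- (Representation theorem for cumulative relations) Assume the compactness assumption on U. A consequence relation ⊦ is cumulative if and only if there exists a cumulative model W such that ⊦ equals ⊦_W. -/
namespace KLM

variable {V : Type}

section Aux

variable {U : Set (World V)} {C : Form V → Form V → Prop}

lemma and_rule_of_cumulative (hC : Cumulative U C) : AndRule C := by
  obtain ⟨hR, hL, hW, hCut, hCM⟩ := hC
  intro a b c hab hac
  have h1 : C (Form.conj a c) b := hCM a c b hac hab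
  have h2 : C (Form.conj (Form.conj a c) b) (Form.conj b c) := by
    refine hW _ _ _ ?_ (hR _)
    intro u _ h
    exact ⟨h.2, h.1.2⟩
  have h3 : C (Form.conj a c) (Form.conj b c) := hCut _ _ _ h2 h1
  exact hCut a c _ h3 hac

/-- If `a ⊦ g`, `g ⊦ a` and `a ⊦ b` then `g ⊦ b`. -/
lemma cn_imp (hC : Cumulative U C) {a g b : Form V}
    (hag : C a g) (hab : C a b) (hga : C g a) : C g b := by
  obtain ⟨hR, hL, hW, hCut, hCM⟩ := hC
  have h1 : C (Form.conj a g) b := hCM a g b hag hab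
  have h2 : C (Form.conj g a) b := by
    refine hL _ _ _ ?_ h1
    intro u _
    exact ⟨fun h => ⟨h.2, h.1⟩, fun h => ⟨h.2, h.1⟩⟩
  exact hCut g a b h2 hga

/-- Falsity propagates downwards: if `a ⊦ ⊥` and `g ⊦ a` then `g ⊦ ⊥`. -/
lemma fls_prop (hC : Cumulative U C) {a g : Form V}
    (haf : C a Form.fls) (hga : C g a) : C g Form.fls := by
  have hag : C a g := hC.2.2.1 Form.fls g a (fun u _ h => h.elim) haf
  exact cn_imp hC hag haf hga

/-- Under compactness, if every normal world for `a` satisfies `b` then `a ⊦ b`. -/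
lemma cons_of_normal (hC : Cumulative U C) (hcomp : Compactness U) {a b : Form V}
    (h : ∀ m, NormalFor U C a m → Sat m b) : C a b := by
  classical
  obtain ⟨hR, hL, hW, hCut, hCM⟩ := id hC
  by_contra hnb
  set G : Set (Form V) := insert (Form.neg b) {g | C a g} with hG
  have hfin : ∀ F : Finset (Form V), ↑F ⊆ G → ∃ u ∈ U, ∀ x ∈ F, Sat u x := by
    intro F hF
    by_contra hns
    push_neg at hns
    set L : List (Form V) := (F.erase (Form.neg b)).toList with hL'
    have hfold_sat : ∀ M : List (Form V), ∀ u : World V,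
        Sat u (M.foldr Form.conj (Form.neg Form.fls)) → ∀ x ∈ M, Sat u x := by
      intro M
      induction M with
      | nil => intro u _ x hx; simp at hx
      | cons y M ih =>
        intro u hs x hx
        rcases List.mem_cons.mp hx with rfl | hx'
        · exact hs.1
        · exact ih u hs.2 x hx'
    have hfold_cons : ∀ M : List (Form V), (∀ x ∈ M, C a x) →
        C a (M.foldr Form.conj (Form.neg Form.fls)) := by
      intro M
      induction M with
      | nil =>
        intro _
        refine hW a _ a ?_ (hR a)
        intro u _ _ hf
        exact hf
      | cons y M ih =>
        intro hM
        exact and_rule_of_cumulative hC a y _ (hM y (by simp))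
          (ih fun x hx => hM x (List.mem_cons_of_mem _ hx))
    have hmemL : ∀ x ∈ L, C a x := by
      intro x hx
      have hx' : x ∈ F.erase (Form.neg b) := by
        rw [hL'] at hx; exact (Finset.mem_toList).mp hx
      have hxG : x ∈ G := hF (Finset.mem_of_mem_erase hx')
      rcases Set.mem_insert_iff.mp hxG with h1 | h2
      · exact absurd h1 (Finset.ne_of_mem_erase hx')
      · exact h2
    set c : Form V := L.foldr Form.conj (Form.neg Form.fls) with hc
    have hCac : C a c := hfold_cons L hmemL
    have hv : Valid U (Form.impl c b) := by
      intro u hu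
      intro hsc
      obtain ⟨x, hxF, hxns⟩ := hns u hu
      by_contra hb'
      rcases eq_or_ne x (Form.neg b) with rfl | hne
      · exact hxns hb'
      · have hxL : x ∈ L := by
          rw [hL']
          exact (Finset.mem_toList).mpr (Finset.mem_erase.mpr ⟨hne, hxF⟩)
        exact hxns (hfold_sat L u hsc x hxL)
    exact hnb (hW c b a hv hCac)
  obtain ⟨u, huU, hu⟩ := hcomp G hfin
  have hnorm : NormalFor U C a u := ⟨huU, fun g hg => hu g (Set.mem_insert_of_mem _ hg)⟩
  exact hu _ (Set.mem_insert _ _) (h u hnorm)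

end Aux

/-- Representation theorem for cumulative relations: under compactness,
a consequence relation is cumulative iff it is defined by some cumulative model. -/
theorem stmt6 {V : Type} (U : Set (World V)) (C : Form V → Form V → Prop)
    (hcomp : Compactness U) :
    Cumulative U C ↔ ∃ W : CumulModel V U, ∀ a b : Form V, C a b ↔ W.Cons a b := by
  constructor
  · -- hard direction: construct the model
    intro hC
    obtain ⟨hR, hL, hW, hCut, hCM⟩ := id hC
    -- key equivalence: for states, StateSat ↔ C
    have key : ∀ g : Form V, ∀ b : Form V,
        (∀ u ∈ {m | NormalFor U C g m}, Sat u b) ↔ C g b := by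
      intro g b
      constructor
      · intro h; exact cons_of_normal hC hcomp h
      · intro h u hu; exact hu.2 b h
    refine ⟨{
      S := {g : Form V // ¬ C g Form.fls}
      l := fun s => {m | NormalFor U C s.1 m}
      l_sub := fun s m hm => hm.1
      l_ne := fun s => by
        by_contra hne
        refine s.2 (cons_of_normal hC hcomp ?_)
        intro m hm
        exact absurd ⟨m, hm⟩ hne
      prec := fun s t => C t.1 s.1 ∧ ¬ C s.1 t.1
      smooth := ?_ }, ?_⟩
    · -- smoothness
      intro a t ht
      have hta : C t.1 a := (key t.1 a).mp ht
      have hanf : ¬ C a Form.fls := fun h => t.2 (fls_prop hC h hta)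
      by_cases hat : C a t.1
      · left
        refine ⟨ht, ?_⟩
        rintro s hs ⟨h1, h2⟩
        have hsa : C s.1 a := (key s.1 a).mp hs
        have has : C a s.1 := cn_imp hC hta h1 hat
        exact h2 (cn_imp hC has hat hsa)
      · right
        refine ⟨⟨a, hanf⟩, ⟨hta, hat⟩, ?_, ?_⟩
        · intro u hu
          exact hu.2 a (hR a)
        · rintro s hs ⟨h1, h2⟩
          exact h2 ((key s.1 a).mp hs)
    · -- the represented relation coincides with C
      intro a b
      constructor
      · intro hab s hmin
        have hsa : C s.1 a := (key s.1 a).mp hmin.1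
        have hanf : ¬ C a Form.fls := fun h => s.2 (fls_prop hC h hsa)
        by_cases has : C a s.1
        · intro u hu
          exact hu.2 b (cn_imp hC has hab hsa)
        · exact absurd ⟨hsa, has⟩
            (hmin.2 ⟨a, hanf⟩ (fun u hu => hu.2 a (hR a)))
      · intro h
        by_cases haf : C a Form.fls
        · exact hW Form.fls b a (fun u _ hf => hf.elim) haf
        · refine (key a b).mp ?_
          refine h ⟨a, haf⟩ ⟨fun u hu => hu.2 a (hR a), ?_⟩
          rintro s hs ⟨h1, h2⟩
          exact h2 ((key s.1 a).mp hs)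
  · -- easy direction: the relation defined by a model is cumulative
    rintro ⟨W, hWC⟩
    have hrefl : Reflexivity W.Cons := fun a s hs => hs.1
    have hlle : LLE U W.Cons := by
      intro a b c hval hac s hs
      have hiff : ∀ t : W.S, W.StateSat t a ↔ W.StateSat t b := by
        intro t
        constructor
        · intro h u hu; exact (hval u (W.l_sub t hu)).mp (h u hu)
        · intro h u hu; exact (hval u (W.l_sub t hu)).mpr (h u hu)
      refine hac s ⟨(hiff s).mpr hs.1, ?_⟩
      intro t ht hpt
      exact hs.2 t ((hiff t).mp ht) hpt
    have hrw : RW U W.Cons := by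
      intro a b c hval hca s hs
      intro u hu
      exact hval u (W.l_sub s hu) (hca s hs u hu)
    have hcut : CutRule W.Cons := by
      intro a b c h1 h2 s hs
      have hb : W.StateSat s b := h2 s hs
      refine h1 s ⟨?_, ?_⟩
      · intro u hu; exact ⟨hs.1 u hu, hb u hu⟩
      · intro t ht hpt
        exact hs.2 t (fun u hu => (ht u hu).1) hpt
    have hcm : CautMono W.Cons := by
      intro a b c h1 h2 s hs
      have hsa : W.StateSat s a := fun u hu => (hs.1 u hu).1
      rcases W.smooth a s hsa with hmin | ⟨t, hts, htmin⟩
      · exact h2 s hmin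
      · exfalso
        have htb : W.StateSat t b := h1 t htmin
        exact hs.2 t (fun u hu => ⟨htmin.1 u hu, htb u hu⟩) hts
    refine ⟨?_, ?_, ?_, ?_, ?_⟩
    · intro a; exact (hWC a a).mpr (hrefl a)
    · intro a b c hval h
      exact (hWC b c).mpr (hlle a b c hval ((hWC a c).mp h))
    · intro a b c hval h
      exact (hWC c b).mpr (hrw a b c hval ((hWC c a).mp h))
    · intro a b c h1 h2
      exact (hWC a c).mpr (hcut a b c ((hWC _ _).mp h1) ((hWC _ _).mp h2))
    · intro a b c h1 h2
      exact (hWC _ c).mpr (hcm a b c ((hWC _ _).mp h1) ((hWC _ _).mp h2))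

end KLM
end

section
/- The rule Loop is valid in all cumulative ordered models: if W is a cumulative ordered model and α₀, α₁, …, α_k are formulas (k ≥ 1) with α_i ⊦_W α_{i+1} for i = 0, …, k−1 and α_k ⊦_W α₀, then α₀ ⊦_W α_k. -/
namespace KLM

variable {V : Type}

/-- the rule Loop is valid in all cumulative ordered models. -/
theorem stmt8 {V : Type} {U : Set (World V)} (W : CumulModel V U)
    (hirr : ∀ s, ¬ W.prec s s)
    (htrans : ∀ s t r, W.prec s t → W.prec t r → W.prec s r)
    (k : ℕ) (hk : 1 ≤ k) (al : ℕ → Form V)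
    (h : ∀ i < k, W.Cons (al i) (al (i + 1)))
    (hlast : W.Cons (al k) (al 0)) :
    W.Cons (al 0) (al k) := by
  intro s hs
  have key : ∀ i ≤ k, ∃ t, MinimalIn W.prec {u : W.S | W.StateSat u (al i)} t ∧
      (t = s ∨ W.prec t s) := by
    intro i
    induction i with
    | zero => exact fun _ => ⟨s, hs, Or.inl rfl⟩
    | succ n ih =>
      intro hn
      obtain ⟨t, ht, hts⟩ := ih (Nat.le_of_succ_le hn)
      have htn1 : t ∈ {u : W.S | ∀ v ∈ W.l u, Sat v (al (n + 1))} :=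
        h n (Nat.lt_of_succ_le hn) t ht
      rcases W.smooth (al (n + 1)) t htn1 with hm | ⟨t', ht', hm'⟩
      · exact ⟨t, hm, hts⟩
      · refine ⟨t', hm', Or.inr ?_⟩
        rcases hts with rfl | hlt
        · exact ht'
        · exact htrans _ _ _ ht' hlt
  obtain ⟨t, ht, hts⟩ := key k le_rfl
  have ht0 : t ∈ {u : W.S | W.StateSat u (al 0)} := hlast t ht
  rcases hts with rfl | hlt
  · exact ht.1
  · exact absurd hlt (hs.2 t ht0)

end KLM
end

section
/- The rule Loop is not valid in cumulative models: taking L to be the propositional formulas over the three variables p₀, p₁, p₂ and U the set of all truth assignments to these variables, there exists a cumulative model V such that p_i ⊦_V p_{i+1} for i = 0, 1, 2 (indices mod 3), but not p₀ ⊦_V p₂. -/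
namespace KLM

variable {V : Type}

/-- The world satisfying exactly `p_i` and `p_{i+1}`. -/
def w3 : Fin 3 → World (Fin 3) := fun i j => j = i ∨ j = i + 1

/-- Labels of the four states. -/
def lbl3 : Fin 4 → Set (World (Fin 3))
  | 0 => {w3 0}
  | 1 => {w3 1}
  | 2 => {w3 2}
  | 3 => {w3 0, w3 1, w3 2}

/-- The preference relation: a 3-cycle on states 0,1,2, with 3 below all of them. -/
def pr3 : Fin 4 → Fin 4 → Prop := fun s t =>
  (s = 1 ∧ t = 0) ∨ (s = 2 ∧ t = 1) ∨ (s = 0 ∧ t = 2) ∨ (s = 3 ∧ t ≠ 3)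

lemma pr3_cases : ∀ s t : Fin 4, pr3 s t ↔
    (s = 1 ∧ t = 0) ∨ (s = 2 ∧ t = 1) ∨ (s = 0 ∧ t = 2) ∨ (s = 3 ∧ t ≠ 3) :=
  fun _ _ => Iff.rfl

lemma not_below3 : ∀ s : Fin 4, ¬ pr3 s 3 := by
  intro s; rw [pr3_cases]; revert s; decide

lemma below0 : ∀ s : Fin 4, pr3 s 0 → s = 1 ∨ s = 3 := by
  intro s; rw [pr3_cases]; revert s; decide

lemma below1 : ∀ s : Fin 4, pr3 s 1 → s = 2 ∨ s = 3 := by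
  intro s; rw [pr3_cases]; revert s; decide

lemma below2 : ∀ s : Fin 4, pr3 s 2 → s = 0 ∨ s = 3 := by
  intro s; rw [pr3_cases]; revert s; decide

lemma smooth3 (A : Set (Fin 4))
    (h : (0:Fin 4) ∈ A → (1:Fin 4) ∈ A → (2:Fin 4) ∈ A → (3:Fin 4) ∈ A) :
    Smooth pr3 A := by
  intro t ht
  by_cases h3 : (3:Fin 4) ∈ A
  · by_cases ht3 : t = 3
    · left; exact ⟨ht, fun s _ hp => not_below3 s (ht3 ▸ hp)⟩
    · right
      exact ⟨3, Or.inr (Or.inr (Or.inr ⟨rfl, ht3⟩)),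
        ⟨h3, fun s _ hp => not_below3 s hp⟩⟩
  · fin_cases t
    · -- t = 0
      by_cases h1 : (1:Fin 4) ∈ A
      · have h2 : (2:Fin 4) ∉ A := fun h2 => h3 (h ht h1 h2)
        exact Or.inr ⟨1, Or.inl ⟨rfl, rfl⟩,
          h1, fun s hs hp => (below1 s hp).elim (fun e => h2 (e ▸ hs)) (fun e => h3 (e ▸ hs))⟩
      · exact Or.inl ⟨ht, fun s hs hp =>
          (below0 s hp).elim (fun e => h1 (e ▸ hs)) (fun e => h3 (e ▸ hs))⟩
    · -- t = 1
      by_cases h2 : (2:Fin 4) ∈ A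
      · have h0 : (0:Fin 4) ∉ A := fun h0 => h3 (h h0 ht h2)
        exact Or.inr ⟨2, Or.inr (Or.inl ⟨rfl, rfl⟩),
          h2, fun s hs hp => (below2 s hp).elim (fun e => h0 (e ▸ hs)) (fun e => h3 (e ▸ hs))⟩
      · exact Or.inl ⟨ht, fun s hs hp =>
          (below1 s hp).elim (fun e => h2 (e ▸ hs)) (fun e => h3 (e ▸ hs))⟩
    · -- t = 2
      by_cases h0 : (0:Fin 4) ∈ A
      · have h1 : (1:Fin 4) ∉ A := fun h1 => h3 (h h0 h1 ht)
        exact Or.inr ⟨0, Or.inr (Or.inr (Or.inl ⟨rfl, rfl⟩)),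
          h0, fun s hs hp => (below0 s hp).elim (fun e => h1 (e ▸ hs)) (fun e => h3 (e ▸ hs))⟩
      · exact Or.inl ⟨ht, fun s hs hp =>
          (below2 s hp).elim (fun e => h0 (e ▸ hs)) (fun e => h3 (e ▸ hs))⟩
    · exact absurd ht h3

/-- The counterexample model. -/
def M3 : CumulModel (Fin 3) (Set.univ : Set (World (Fin 3))) where
  S := Fin 4
  l := lbl3
  l_sub := fun _ _ _ => trivial
  l_ne := by
    intro s
    fin_cases s
    · exact ⟨w3 0, rfl⟩
    · exact ⟨w3 1, rfl⟩
    · exact ⟨w3 2, rfl⟩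
    · exact ⟨w3 0, Or.inl rfl⟩
  prec := pr3
  smooth := by
    intro a
    apply smooth3
    intro h0 h1 h2 u hu
    rcases hu with rfl | rfl | rfl
    · exact h0 _ rfl
    · exact h1 _ rfl
    · exact h2 _ rfl

lemma M3_statesat (s : Fin 4) (j : Fin 3) :
    M3.StateSat s (Form.var j) ↔
      (s = 0 ∧ (j = 0 ∨ j = 1)) ∨ (s = 1 ∧ (j = 1 ∨ j = 2)) ∨
      (s = 2 ∧ (j = 2 ∨ j = 0)) := by
  constructor
  · intro hs
    fin_cases s
    · exact Or.inl ⟨rfl, hs (w3 0) rfl⟩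
    · exact Or.inr (Or.inl ⟨rfl, hs (w3 1) rfl⟩)
    · exact Or.inr (Or.inr ⟨rfl, hs (w3 2) rfl⟩)
    · exfalso
      have h0 : w3 0 j := hs (w3 0) (Or.inl rfl)
      have h1 : w3 1 j := hs (w3 1) (Or.inr (Or.inl rfl))
      have h2 : w3 2 j := hs (w3 2) (Or.inr (Or.inr rfl))
      clear hs
      revert h0 h1 h2
      unfold w3; revert j; decide
  · rintro (⟨rfl, hj⟩ | ⟨rfl, hj⟩ | ⟨rfl, hj⟩) <;>
    · intro u hu
      rcases hu with rfl
      show w3 _ j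
      unfold w3
      revert hj; revert j; decide

/-- Loop is not valid in cumulative models: over the language with three
propositional variables and the universe of all worlds, there is a cumulative model `V`
with pᵢ ⊦_V pᵢ₊₁ (indices mod 3) but not p₀ ⊦_V p₂. -/
theorem stmt9 :
    ∃ W : CumulModel (Fin 3) (Set.univ : Set (World (Fin 3))),
      (∀ i : Fin 3, W.Cons (Form.var i) (Form.var (i + 1))) ∧
        ¬ W.Cons (Form.var 0) (Form.var 2) := by
  refine ⟨M3, ?_, ?_⟩
  · intro i s hs
    obtain ⟨hmem, hmin⟩ := hs
    have hmem' := (M3_statesat s i).1 hmem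
    have Hmin : ∀ t : Fin 4, M3.StateSat t (Form.var i) → ¬ pr3 t s :=
      fun t h1 => hmin t h1
    refine (M3_statesat s (i + 1)).2 ?_
    fin_cases i
    · rcases hmem' with ⟨rfl, _⟩ | ⟨rfl, hj⟩ | ⟨rfl, _⟩
      · exact Or.inl ⟨rfl, by decide⟩
      · exact absurd hj (by decide)
      · exact absurd (Or.inr (Or.inr (Or.inl ⟨rfl, rfl⟩)) : pr3 0 2)
          (Hmin 0 ((M3_statesat 0 0).2 (Or.inl ⟨rfl, Or.inl rfl⟩)))
    · rcases hmem' with ⟨rfl, _⟩ | ⟨rfl, _⟩ | ⟨rfl, hj⟩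
      · exact absurd (Or.inl ⟨rfl, rfl⟩ : pr3 1 0)
          (Hmin 1 ((M3_statesat 1 1).2 (Or.inr (Or.inl ⟨rfl, Or.inl rfl⟩))))
      · exact Or.inr (Or.inl ⟨rfl, by decide⟩)
      · exact absurd hj (by decide)
    · rcases hmem' with ⟨rfl, hj⟩ | ⟨rfl, _⟩ | ⟨rfl, _⟩
      · exact absurd hj (by decide)
      · exact absurd (Or.inr (Or.inl ⟨rfl, rfl⟩) : pr3 2 1)
          (Hmin 2 ((M3_statesat 2 2).2 (Or.inr (Or.inr ⟨rfl, Or.inl rfl⟩))))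
      · exact Or.inr (Or.inr ⟨rfl, by decide⟩)
  · intro hcons
    have hm : MinimalIn M3.prec {t : M3.S | M3.StateSat t (Form.var 0)} (0 : Fin 4) := by
      refine ⟨(M3_statesat 0 0).2 (Or.inl ⟨rfl, Or.inl rfl⟩), ?_⟩
      intro s hs hp
      rcases below0 s hp with rfl | rfl
      · rcases (M3_statesat 1 0).1 hs with ⟨e, _⟩ | ⟨_, hj⟩ | ⟨e, _⟩
        · exact absurd e (by decide)
        · exact absurd hj (by decide)
        · exact absurd e (by decide)
      · rcases (M3_statesat 3 0).1 hs with ⟨e, _⟩ | ⟨e, _⟩ | ⟨e, _⟩ <;>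
          exact absurd e (by decide)
    have hsat := (M3_statesat 0 2).1 (hcons (0 : Fin 4) hm)
    rcases hsat with ⟨_, hj⟩ | ⟨e, _⟩ | ⟨e, _⟩
    · exact absurd hj (by decide)
    · exact absurd e (by decide)
    · exact absurd e (by decide)

end KLM
end

section
/- If a consequence relation ⊦ satisfies Reflexivity, Right Weakening, Left Logical Equivalence and Or, then it satisfies the rule S: if α ∧ β ⊦ γ then α ⊦ β → γ. -/
namespace KLM

variable {V : Type}

/-- Reflexivity, RW, LLE and Or imply the rule S. -/
theorem stmt11 {V : Type} (U : Set (World V)) (C : Form V → Form V → Prop)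
    (hRefl : Reflexivity C) (hRW : RW U C) (hLLE : LLE U C) (hOr : OrRule C) :
    SRule C := by
  intro a b c h
  have h1 : C (Form.conj a b) (Form.impl b c) :=
    hRW c (Form.impl b c) (Form.conj a b) (fun u _ hc _ => hc) h
  have h2 : C (Form.conj a (Form.neg b)) (Form.impl b c) :=
    hRW (Form.conj a (Form.neg b)) (Form.impl b c) _
      (fun u _ hu hb => absurd hb hu.2) (hRefl _)
  have h3 : C (Form.disj (Form.conj a b) (Form.conj a (Form.neg b))) (Form.impl b c) :=
    hOr _ _ _ h1 h2
  exact hLLE _ a _ (fun u _ => by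
    constructor
    · rintro (⟨ha, _⟩ | ⟨ha, _⟩) <;> exact ha
    · intro ha
      by_cases hb : Sat u b
      · exact Or.inl ⟨ha, hb⟩
      · exact Or.inr ⟨ha, hb⟩) h3

end KLM
end

section
/- Every preferential consequence relation ⊦ satisfies the following derived rules: (i) if α ⊦ γ and β ⊦ δ, then α ∨ β ⊦ γ ∨ δ; (ii) if α ∨ γ ⊦ γ and α ⊦ β, then γ ⊦ α → β; (iii) if α ∨ β ⊦ α and β ∨ γ ⊦ β, then α ∨ γ ⊦ α; (iv) if α ∨ β ⊦ α and β ∨ γ ⊦ β, then α ⊦ γ → β. -/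
namespace KLM

variable {V : Type}

/-- derived rules of the system P. -/
theorem stmt13 {V : Type} (U : Set (World V)) (C : Form V → Form V → Prop)
    (hP : Preferential U C) :
    (∀ a b c d, C a c → C b d → C (Form.disj a b) (Form.disj c d)) ∧
    (∀ a b c, C (Form.disj a c) c → C a b → C c (Form.impl a b)) ∧
    (∀ a b c, C (Form.disj a b) a → C (Form.disj b c) b → C (Form.disj a c) a) ∧
    (∀ a b c, C (Form.disj a b) a → C (Form.disj b c) b → C a (Form.impl c b)) := by
  obtain ⟨⟨refl, lle, rw', cut, cm⟩, orr⟩ := hP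
  -- S rule: from α ∧ β ⊦ γ infer α ⊦ β → γ
  have S : ∀ a b c, C (Form.conj a b) c → C a (Form.impl b c) := by
    intro a b c h
    have h1 : C (Form.conj a b) (Form.impl b c) :=
      rw' c (Form.impl b c) _ (fun u _ => by simp only [Sat]; tauto) h
    have h2 : C (Form.conj a (Form.neg b)) (Form.impl b c) :=
      rw' (Form.conj a (Form.neg b)) (Form.impl b c) _
        (fun u _ => by simp only [Sat]; tauto) (refl _)
    have h3 : C (Form.disj (Form.conj a b) (Form.conj a (Form.neg b)))
        (Form.impl b c) := orr _ _ _ h1 h2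
    exact lle _ a _ (fun u _ => by simp only [Sat]; tauto) h3
  constructor
  · -- (i)
    intro a b c d h1 h2
    have ha : C a (Form.disj c d) :=
      rw' c (Form.disj c d) a (fun u _ => by simp only [Sat]; tauto) h1
    have hb : C b (Form.disj c d) :=
      rw' d (Form.disj c d) b (fun u _ => by simp only [Sat]; tauto) h2
    exact orr _ _ _ ha hb
  constructor
  · -- (ii): lemma 5.5 style
    intro a b c h1 h2
    have ha : C a (Form.impl a b) :=
      rw' b (Form.impl a b) a (fun u _ => by simp only [Sat]; tauto) h2
    have hn : C (Form.conj (Form.neg a) c) (Form.impl a b) :=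
      rw' (Form.conj (Form.neg a) c) (Form.impl a b) _
        (fun u _ => by simp only [Sat]; tauto) (refl _)
    have hor : C (Form.disj a (Form.conj (Form.neg a) c)) (Form.impl a b) :=
      orr _ _ _ ha hn
    have hac : C (Form.disj a c) (Form.impl a b) :=
      lle _ (Form.disj a c) _ (fun u _ => by simp only [Sat]; tauto) hor
    have hcm : C (Form.conj (Form.disj a c) c) (Form.impl a b) :=
      cm _ _ _ h1 hac
    exact lle _ c _ (fun u _ => by simp only [Sat]; tauto) hcm
  · -- (iii) and (iv): first derive C E a for E = (a∨b)∨(b∨c)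
    have key : ∀ a b c, C (Form.disj a b) a → C (Form.disj b c) b →
        C (Form.disj (Form.disj a b) (Form.disj b c)) a := by
      intro a b c h1 h2
      set E := Form.disj (Form.disj a b) (Form.disj b c) with hE
      have hbc : C (Form.disj b c) (Form.disj a b) :=
        rw' b (Form.disj a b) _ (fun u _ => by simp only [Sat]; tauto) h2
      have hEab : C E (Form.disj a b) := orr _ _ _ (refl _) hbc
      have hEa' : C (Form.conj E (Form.disj a b)) a :=
        lle (Form.disj a b) _ a (fun u _ => by simp only [Sat]; tauto) h1
      exact cut E (Form.disj a b) a hEa' hEab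
    constructor
    · -- (iii)
      intro a b c h1 h2
      have hEa := key a b c h1 h2
      set E := Form.disj (Form.disj a b) (Form.disj b c) with hE
      have hEac : C E (Form.disj a c) :=
        rw' a (Form.disj a c) E (fun u _ => by simp only [Sat]; tauto) hEa
      have hcm : C (Form.conj E (Form.disj a c)) a := cm _ _ _ hEac hEa
      exact lle _ (Form.disj a c) a (fun u _ => by simp only [Sat]; tauto) hcm
    · -- (iv)
      intro a b c h1 h2
      have hEa := key a b c h1 h2
      set E := Form.disj (Form.disj a b) (Form.disj b c) with hE
      have hEbc : C (Form.conj E (Form.disj b c)) b :=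
        lle (Form.disj b c) _ b (fun u _ => by simp only [Sat]; tauto) h2
      have hS : C E (Form.impl (Form.disj b c) b) := S _ _ _ hEbc
      have hEcb : C E (Form.impl c b) :=
        rw' (Form.impl (Form.disj b c) b) (Form.impl c b) E
          (fun u _ => by simp only [Sat]; tauto) hS
      have hcm : C (Form.conj E a) (Form.impl c b) := cm _ _ _ hEa hEcb
      exact lle _ a _ (fun u _ => by simp only [Sat]; tauto) hcm

end KLM
end

section
/- (Soundness for preferential models) For every preferential model W, the consequence relation ⊦_W defined by W is a preferential consequence relation, i.e. it satisfies Reflexivity, Left Logical Equivalence, Right Weakening, Cut, Cautious Monotonicity, and Or. -/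
namespace KLM

variable {V : Type}

/-- Soundness for preferential models: the consequence relation defined
by any preferential model is preferential. -/
theorem stmt14 {V : Type} {U : Set (World V)} (W : PrefModel V U) :
    Preferential U W.Cons := by
  refine ⟨⟨?_, ?_, ?_, ?_, ?_⟩, ?_⟩
  · -- Reflexivity
    intro a s hs
    exact hs.1
  · -- LLE
    intro a b c hV hab s hs
    have hEq : {t : W.S | Sat (W.l t) a} = {t : W.S | Sat (W.l t) b} := by
      ext t
      exact hV (W.l t) (W.l_mem t)
    exact hab s (hEq ▸ hs)
  · -- RW
    intro a b c hV hca s hs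
    exact hV (W.l s) (W.l_mem s) (hca s hs)
  · -- Cut
    intro a b c habc hab s hs
    refine habc s ⟨⟨hs.1, hab s hs⟩, ?_⟩
    intro t ht hts
    exact hs.2 t ht.1 hts
  · -- Cautious Monotonicity
    intro a b c hab hac s hs
    have hsa : Sat (W.l s) a := hs.1.1
    rcases W.smooth a s hsa with hmin | ⟨t, hts, htmin⟩
    · exact hac s hmin
    · exfalso
      exact hs.2 t ⟨htmin.1, hab t htmin⟩ hts
  · -- Or
    intro a b c hac hbc s hs
    rcases hs.1 with ha | hb
    · refine hac s ⟨ha, fun t ht hts => hs.2 t (Or.inl ht) hts⟩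
    · refine hbc s ⟨hb, fun t ht hts => hs.2 t (Or.inr ht) hts⟩

end KLM
end

section
/- Let ⊦ be a preferential consequence relation and define α ≤ β iff α ∨ β ⊦ α. Then the relation ≤ on formulas is reflexive and transitive. -/
namespace KLM

variable {V : Type}

section Ordering

variable {U : Set (World V)} {C : Form V → Form V → Prop}

/-- The relation `α ≤ β` of the statement. -/
def AtLeastAsNormal (C : Form V → Form V → Prop) (a b : Form V) : Prop :=
  C (Form.disj a b) a

/-- Since `β ⊨ α`, `α ∧ β` is equivalent to `β`: Cautious Monotonicity and Cut then transfer
consequences in either direction. -/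
theorem cons_iff_of_valid_impl (hLLE : LLE U C) (hCut : CutRule C) (hCM : CautMono C)
    {a b c : Form V} (hba : Valid U (Form.impl b a)) (hab : C a b) : C a c ↔ C b c := by
  have hconj : Valid U (Form.biim (Form.conj a b) b) := fun u hu => by
    simp only [Sat] at hba ⊢
    exact ⟨And.right, fun hb => ⟨hba u hu hb, hb⟩⟩
  have hconj' : Valid U (Form.biim b (Form.conj a b)) := fun u hu => (hconj u hu).symm
  exact ⟨fun hac => hLLE _ _ _ hconj (hCM a b c hab hac),
    fun hbc => hCut a b c (hLLE _ _ _ hconj' hbc) hab⟩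

theorem atLeastAsNormal_refl (hRefl : Reflexivity C) (hLLE : LLE U C) (a : Form V) :
    AtLeastAsNormal C a a :=
  hLLE a _ a (fun u _ => by simp only [Sat]; tauto) (hRefl a)

theorem atLeastAsNormal_trans (hP : Preferential U C) {a b c : Form V}
    (hab : AtLeastAsNormal C a b) (hbc : AtLeastAsNormal C b c) : AtLeastAsNormal C a c := by
  obtain ⟨⟨hRefl, hLLE, hRW, hCut, hCM⟩, hOr⟩ := hP
  -- `d` is entailed by both `a ∨ b` and `a ∨ c`, and `d ⊦ a ∨ b` by Or.
  set d := Form.disj (Form.disj a b) (Form.disj b c)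
  have hd_ab : C d (Form.disj a b) :=
    hOr _ _ _ (hRefl _) (hRW b _ _ (fun u _ => by simp only [Sat]; tauto) hbc)
  have hd_a : C d a :=
    (cons_iff_of_valid_impl hLLE hCut hCM (fun u _ => by simp only [d, Sat]; tauto) hd_ab).2 hab
  have hd_ac : C d (Form.disj a c) := hRW a _ d (fun u _ => by simp only [Sat]; tauto) hd_a
  exact (cons_iff_of_valid_impl hLLE hCut hCM
    (fun u _ => by simp only [d, Sat]; tauto) hd_ac).1 hd_a

end Ordering

/-- for a preferential relation, the ordinarity relation
α ≤ β iff α ∨ β ⊦ α is reflexive and transitive. -/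
theorem stmt15 {V : Type} (U : Set (World V)) (C : Form V → Form V → Prop)
    (hP : Preferential U C) :
    (∀ a : Form V, C (Form.disj a a) a) ∧
    (∀ a b c : Form V,
      C (Form.disj a b) a → C (Form.disj b c) b → C (Form.disj a c) a) :=
  ⟨atLeastAsNormal_refl hP.1.1 hP.1.2.1, fun _ _ _ => atLeastAsNormal_trans hP⟩

end KLM
end

section
/- (Horn assertions: P collapses to CL) Let L be the classical propositional formulas over a set of propositional variables and U the set of all truth assignments to the variables. Let K be a set of Horn assertions and A a Horn assertion. If A belongs to the smallest preferential consequence relation containing K, then A belongs to the smallest loop-cumulative consequence relation containing K. -/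
namespace KLM

variable {V : Type}

/-- A Horn antecedent: a conjunction of zero or more propositional variables
(the empty conjunction being `true`, i.e. `¬ false`). -/
def HornAnte {V : Type} (a : Form V) : Prop :=
  ∃ l : List V, a = (l.map Form.var).foldr Form.conj (Form.neg Form.fls)

/-- A Horn consequent: a single propositional variable or the formula `false`. -/
def HornCons {V : Type} (b : Form V) : Prop :=
  (∃ p : V, b = Form.var p) ∨ b = Form.fls

/-- A Horn assertion. -/
def HornAssertion {V : Type} (a b : Form V) : Prop := HornAnte a ∧ HornCons b

-- ===== auxiliary development =====

/-- conjunction of a list of variables -/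
def phi (l : List V) : Form V := (l.map Form.var).foldr Form.conj (Form.neg Form.fls)

@[simp] lemma sat_var (u : World V) (p : V) : Sat u (Form.var p) ↔ u p := Iff.rfl
@[simp] lemma sat_fls (u : World V) : Sat u (Form.fls : Form V) ↔ False := Iff.rfl
@[simp] lemma sat_neg (u : World V) (a : Form V) : Sat u (Form.neg a) ↔ ¬ Sat u a := Iff.rfl
@[simp] lemma sat_conj (u : World V) (a b : Form V) :
    Sat u (Form.conj a b) ↔ Sat u a ∧ Sat u b := Iff.rfl
@[simp] lemma sat_disj (u : World V) (a b : Form V) :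
    Sat u (Form.disj a b) ↔ Sat u a ∨ Sat u b := Iff.rfl
@[simp] lemma sat_impl (u : World V) (a b : Form V) :
    Sat u (Form.impl a b) ↔ (Sat u a → Sat u b) := Iff.rfl

lemma sat_phi (u : World V) (l : List V) : Sat u (phi l) ↔ ∀ p ∈ l, u p := by
  induction l with
  | nil => simp [phi]
  | cons p l ih =>
      have : phi (p :: l) = Form.conj (Form.var p) (phi l) := rfl
      rw [this, sat_conj, sat_var, ih]
      simp

section Rules
variable {C : Form V → Form V → Prop}

lemma supra (hcum : Cumulative (Set.univ : Set (World V)) C) {x y : Form V}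
    (h : ∀ u : World V, Sat u x → Sat u y) : C x y :=
  hcum.2.2.1 x y x (fun u _ => h u) (hcum.1 x)

lemma andR (hcum : Cumulative (Set.univ : Set (World V)) C) {a b c : Form V}
    (hab : C a b) (hac : C a c) : C a (Form.conj b c) := by
  have s1 : C (Form.conj a b) c := hcum.2.2.2.2 a b c hab hac
  have s2 : C (Form.conj (Form.conj a b) c) (Form.conj b c) :=
    supra hcum (fun u hu => by
      rw [sat_conj] at hu ⊢; rw [sat_conj] at hu; exact ⟨hu.1.2, hu.2⟩)
  have s3 : C (Form.conj a b) (Form.conj b c) := hcum.2.2.2.1 _ _ _ s2 s1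
  exact hcum.2.2.2.1 _ _ _ s3 hab

lemma equivR (hcum : Cumulative (Set.univ : Set (World V)) C) (hloop : LoopRule C)
    {α β γ : Form V} (h1 : C α β) (h2 : C β α) (h3 : C α γ) : C β γ := by
  have hconj : C β (Form.conj α γ) := by
    have ha : C α (Form.conj α γ) := andR hcum (hcum.1 α) h3
    have hb : C (Form.conj α γ) β := hcum.2.2.2.2 α γ β h3 h1
    have := hloop 2 (by omega)
      (fun i => match i with | 0 => β | 1 => α | _ => Form.conj α γ)
      (by intro i hi; interval_cases i
          · exact h2
          · exact ha)
      hb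
    exact this
  exact hcum.2.2.1 (Form.conj α γ) γ β (fun u _ hu => (sat_conj u α γ |>.mp hu).2) hconj

lemma phiR (hcum : Cumulative (Set.univ : Set (World V)) C) {y : Form V} {l : List V}
    (h : ∀ p ∈ l, C y (Form.var p)) : C y (phi l) := by
  induction l with
  | nil => exact supra hcum (fun u _ => by simp [phi, Sat])
  | cons p l ih =>
      have : phi (p :: l) = Form.conj (Form.var p) (phi l) := rfl
      rw [this]
      exact andR hcum (h p (by simp)) (ih (fun q hq => h q (by simp [hq])))

end Rules

lemma chain_of_rtg {α : Type*} {r : α → α → Prop} {x y : α}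
    (h : Relation.ReflTransGen r x y) :
    ∃ n : ℕ, ∃ f : ℕ → α, f 0 = x ∧ f n = y ∧ ∀ i < n, r (f i) (f (i + 1)) := by
  induction h with
  | refl => exact ⟨0, fun _ => x, rfl, rfl, by omega⟩
  | @tail b c hxb hbc ih =>
      obtain ⟨n, f, h0, hn, hs⟩ := ih
      refine ⟨n + 1, fun i => if i ≤ n then f i else c, by simp [h0], by simp, ?_⟩
      intro i hi
      rcases Nat.lt_or_ge i n with h' | h'
      · simpa [Nat.le_of_lt h', Nat.succ_le_of_lt h'] using hs i h'
      · have : i = n := by omega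
        subst this
        simpa [hn] using hbc

section Model
variable (C : Form V → Form V → Prop)

/-- states: consistent finite lists of variables -/
def StC := {l : List V // ¬ C (phi l) Form.fls}

def rr (X Y : StC C) : Prop := ∀ p ∈ X.1, C (phi Y.1) (Form.var p)

def below : StC C → StC C → Prop := Relation.ReflTransGen (rr C)

def wS (S : StC C) : World V := fun p => C (phi S.1) (Form.var p)

def SatS (S : StC C) (α : Form V) : Prop := Sat (wS C S) α

/-- the limit-semantics preferential relation built over `C`'s Horn structure -/
def Cpref (α β : Form V) : Prop :=
  ∀ S : StC C, SatS C S α →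
    ∃ T : StC C, below C T S ∧ SatS C T α ∧
      ∀ R : StC C, below C R T → SatS C R α → SatS C R β

end Model

section ModelLemmas
variable {C : Form V → Form V → Prop}

lemma cpref_preferential :
    Preferential (Set.univ : Set (World V)) (Cpref C) := by
  constructor
  · refine ⟨?_, ?_, ?_, ?_, ?_⟩
    · -- Reflexivity
      intro α S hS
      exact ⟨S, Relation.ReflTransGen.refl, hS, fun R _ h => h⟩
    · -- LLE
      intro α β γ hval hC S hS
      have hiff : ∀ u : World V, Sat u α ↔ Sat u β := fun u => hval u (Set.mem_univ u)
      obtain ⟨T, hTS, hTα, hT⟩ := hC S ((hiff _).mpr hS)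
      exact ⟨T, hTS, (hiff _).mp hTα, fun R hR hRβ => hT R hR ((hiff _).mpr hRβ)⟩
    · -- RW
      intro α β γ hval hC S hS
      have himp : ∀ u : World V, Sat u α → Sat u β := fun u => hval u (Set.mem_univ u)
      obtain ⟨T, hTS, hTγ, hT⟩ := hC S hS
      exact ⟨T, hTS, hTγ, fun R hR hRγ => himp _ (hT R hR hRγ)⟩
    · -- Cut
      intro α β γ h1 h2 S hS
      obtain ⟨T, hTS, hTα, hT⟩ := h2 S hS
      have hTβ : SatS C T β := hT T Relation.ReflTransGen.refl hTα
      obtain ⟨T', hT'T, hT'αβ, hT'⟩ := h1 T ⟨hTα, hTβ⟩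
      refine ⟨T', hT'T.trans hTS, hT'αβ.1, fun R hR hRα => ?_⟩
      exact hT' R hR ⟨hRα, hT R (hR.trans hT'T) hRα⟩
    · -- CM
      intro α β γ h1 h2 S hS
      obtain ⟨t, hts, htα, ht⟩ := h2 S hS.1
      obtain ⟨t', ht't, ht'α, ht'⟩ := h1 t htα
      have ht'β : SatS C t' β := ht' t' Relation.ReflTransGen.refl ht'α
      refine ⟨t', ht't.trans hts, ⟨ht'α, ht'β⟩, fun R hR hRαβ => ?_⟩
      exact ht R (hR.trans ht't) hRαβ.1
  · -- Or
    intro α β γ h1 h2 S hS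
    rcases hS with hSα | hSβ
    · obtain ⟨t, hts, htα, ht⟩ := h1 S hSα
      by_cases hex : ∃ r : StC C, below C r t ∧ SatS C r β
      · obtain ⟨r, hrt, hrβ⟩ := hex
        obtain ⟨t2, ht2r, ht2β, ht2⟩ := h2 r hrβ
        refine ⟨t2, ht2r.trans (hrt.trans hts), Or.inr ht2β, fun R hR hRd => ?_⟩
        rcases hRd with hα | hβ
        · exact ht R (hR.trans (ht2r.trans hrt)) hα
        · exact ht2 R hR hβ
      · refine ⟨t, hts, Or.inl htα, fun R hR hRd => ?_⟩
        rcases hRd with hα | hβ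
        · exact ht R hR hα
        · exact absurd ⟨R, hR, hβ⟩ hex
    · obtain ⟨t, hts, htβ, ht⟩ := h2 S hSβ
      by_cases hex : ∃ r : StC C, below C r t ∧ SatS C r α
      · obtain ⟨r, hrt, hrα⟩ := hex
        obtain ⟨t2, ht2r, ht2α, ht2⟩ := h1 r hrα
        refine ⟨t2, ht2r.trans (hrt.trans hts), Or.inl ht2α, fun R hR hRd => ?_⟩
        rcases hRd with hα | hβ
        · exact ht2 R hR hα
        · exact ht R (hR.trans (ht2r.trans hrt)) hβ
      · refine ⟨t, hts, Or.inr htβ, fun R hR hRd => ?_⟩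
        rcases hRd with hα | hβ
        · exact absurd ⟨R, hR, hα⟩ hex
        · exact ht R hR hβ

/-- Loop gives: a `below`-chain plus a direct derivation back yields the reverse derivation. -/
lemma loop_chain (hcum : Cumulative (Set.univ : Set (World V)) C) (hloop : LoopRule C)
    {T S : StC C} (h : below C T S) (hclose : C (phi T.1) (phi S.1)) :
    C (phi S.1) (phi T.1) := by
  obtain ⟨n, f, h0, hn, hs⟩ := chain_of_rtg h
  rcases Nat.eq_zero_or_pos n with hz | hpos
  · subst hz
    have : T = S := h0.symm.trans hn
    rw [this]
    exact hcum.1 _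
  · have key := hloop n hpos (fun i => phi ((f (n - i)).1)) ?_ ?_
    · simpa [hn, h0] using key
    · intro i hi
      have hj : n - i - 1 < n := by omega
      have hstep : C (phi ((f (n - i - 1 + 1)).1)) (phi ((f (n - i - 1)).1)) :=
        phiR hcum (hs (n - i - 1) hj)
      have e1 : n - i - 1 + 1 = n - i := by omega
      have e2 : n - (i + 1) = n - i - 1 := by omega
      rw [e1] at hstep
      simpa [e2] using hstep
    · simpa [hn, h0] using hclose


lemma incons_state (hcum : Cumulative (Set.univ : Set (World V)) C) (hloop : LoopRule C)
    {l : List V} {S : StC C} (hS : SatS C S (phi l)) (hbot : C (phi l) Form.fls) : False := by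
  have hmem : ∀ p ∈ l, C (phi S.1) (Form.var p) := (sat_phi _ _).mp hS
  have hSl : C (phi S.1) (phi l) := phiR hcum hmem
  have hlS : C (phi l) (phi S.1) :=
    hcum.2.2.1 Form.fls (phi S.1) (phi l) (fun u _ hu => absurd hu (by simp)) hbot
  exact S.2 (equivR hcum hloop hlS hSl hbot)

lemma k_sound (hcum : Cumulative (Set.univ : Set (World V)) C) (hloop : LoopRule C)
    {l : List V} {b : Form V} (hcons : HornCons b) (hCK : C (phi l) b) :
    Cpref C (phi l) b := by
  intro S hS
  rcases hcons with ⟨q, rfl⟩ | rfl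
  · -- consequent is a variable
    by_cases hbot : C (phi l) Form.fls
    · exact absurd (incons_state hcum hloop hS hbot) (fun h => h)
    · refine ⟨⟨l, hbot⟩, Relation.ReflTransGen.single ?_, ?_, ?_⟩
      · exact fun p hp => (sat_phi _ _).mp hS p hp
      · exact (sat_phi _ _).mpr (fun p hp =>
          supra hcum (fun u hu => (sat_phi u l).mp hu p hp))
      · intro R hRT hRl
        have hclose : C (phi R.1) (phi l) := phiR hcum ((sat_phi _ _).mp hRl)
        have hrev : C (phi l) (phi R.1) := loop_chain hcum hloop hRT hclose
        exact equivR hcum hloop hrev hclose hCK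
  · exact absurd (incons_state hcum hloop hS hCK) (fun h => h)

lemma pull_back (hcum : Cumulative (Set.univ : Set (World V)) C) (hloop : LoopRule C)
    {l : List V} {b : Form V} (hcons : HornCons b) (hC' : Cpref C (phi l) b) :
    C (phi l) b := by
  by_cases hbot : C (phi l) Form.fls
  · refine hcum.2.2.1 Form.fls b (phi l) (fun u _ hu => absurd hu (by simp)) hbot
  · have hSA : SatS C (⟨l, hbot⟩ : StC C) (phi l) :=
      (sat_phi _ _).mpr (fun p hp => supra hcum (fun u hu => (sat_phi u l).mp hu p hp))
    obtain ⟨T, hTS, hTa, hT⟩ := hC' ⟨l, hbot⟩ hSA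
    have hTb : SatS C T b := hT T Relation.ReflTransGen.refl hTa
    have hclose : C (phi T.1) (phi l) := phiR hcum ((sat_phi _ _).mp hTa)
    have hrev : C (phi l) (phi T.1) := loop_chain hcum hloop hTS hclose
    rcases hcons with ⟨q, rfl⟩ | rfl
    · exact equivR hcum hloop hclose hrev hTb
    · exact absurd hTb (by simp [SatS])

end ModelLemmas


/-- Horn assertions: P collapses to CL: with `U` the set of all worlds,
if a Horn assertion belongs to the smallest preferential consequence relation containing
a set `K` of Horn assertions, then it belongs to the smallest loop-cumulative
consequence relation containing `K`. -/
theorem stmt17 {V : Type} (K : Set (Form V × Form V))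
    (hK : ∀ p ∈ K, HornAssertion p.1 p.2) (a b : Form V) (hab : HornAssertion a b)
    (h : ∀ C : Form V → Form V → Prop,
      Preferential (Set.univ : Set (World V)) C → (∀ p ∈ K, C p.1 p.2) → C a b) :
    ∀ C : Form V → Form V → Prop,
      Cumulative (Set.univ : Set (World V)) C ∧ LoopRule C →
        (∀ p ∈ K, C p.1 p.2) → C a b := by
  rintro C ⟨hcum, hloop⟩ hCK
  have hmain : Cpref C a b := by
    refine h (Cpref C) cpref_preferential ?_
    intro p hp
    obtain ⟨⟨l, hl⟩, hcons⟩ := hK p hp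
    have : p.1 = phi l := hl
    rw [this]
    exact k_sound hcum hloop hcons (this ▸ hCK p hp)
  obtain ⟨⟨l, hl⟩, hcons⟩ := hab
  have : a = phi l := hl
  rw [this]
  exact pull_back hcum hloop hcons (this ▸ hmain)

end KLM
end
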